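/- Let m be a non-negative integer and z a complex number with |z| < 1. Define a sequence (v_n) by v_0 = 1, v_1 = −6m², v_2 = 2(7m⁴ − m²), and for n ≥ 2, v_{n+1} = ((−20m² + 6n² − 9n + 5)/(2n² + 3n + 1)) v_n + ((−36m⁴ + 20m²(n−1)(4n−5) − 2(n−1)(2n(3(n−4)n + 17) − 17))/(n(n+1)(2n−1)(2n+1))) v_{n-1} + (4(9m⁴ − 10m²(n−2)² + (n−2)⁴)/(n(n+1)(2n−1)(2n+1))) v_{n-2}. Then T_m(1−2z)³ = F(−m, m; 1/2; z)³ = ∑_{n=0}^∞ v_n z^n, where T_m denotes the Chebyshev polynomial of the first kind of degree m. -/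

import Mathlib

open scoped Nat

open Polynomial Polynomial.Chebyshev in
private lemma my_cheb_ode (n : ℤ) :
    (1 - X ^ 2) * derivative (derivative (T ℂ n)) =
      X * derivative (T ℂ n) - (n : ℂ[X]) ^ 2 * T ℂ n := by
  have h0 : (1 - X ^ 2) * derivative (T ℂ n) =
      (n : ℂ[X]) * (T ℂ (n - 1) - X * T ℂ n) := by
    have h := one_sub_X_sq_mul_derivative_T_eq_poly_in_T (R := ℂ) (n - 1)
    simp only [sub_add_cancel] at h
    push_cast at h ⊢
    linear_combination h
  have h1 := congrArg derivative h0
  have e1 : n - 1 - 1 = n - 2 := by ring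
  simp only [derivative_mul, derivative_sub, derivative_one, derivative_X_pow, derivative_X,
    derivative_intCast, map_ofNat] at h1
  rw [T_derivative_eq_U, T_derivative_eq_U, T_eq_U_sub_X_mul_U (R := ℂ) n,
    T_eq_U_sub_X_mul_U (R := ℂ) (n - 1), e1, U_sub_two] at h1
  rw [T_derivative_eq_U, T_eq_U_sub_X_mul_U]
  push_cast at h1 ⊢
  have e2 : (C 2 : ℂ[X]) = 2 := by norm_cast
  rw [e2] at h1
  linear_combination h1

open Polynomial Polynomial.Chebyshev in
private lemma my_hyp_ode (n : ℤ) :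
    2 * (X * ((1 - X) * derivative (derivative ((T ℂ n).comp (1 - 2 * X)))))
      + (1 - 2 * X) * derivative ((T ℂ n).comp (1 - 2 * X))
      + 2 * (n : ℂ[X]) ^ 2 * (T ℂ n).comp (1 - 2 * X) = 0 := by
  have hq : derivative (1 - 2 * X : ℂ[X]) = -2 := by
    simp [derivative_sub]
  have h1 : derivative ((T ℂ n).comp (1 - 2 * X)) =
      (-2) * (derivative (T ℂ n)).comp (1 - 2 * X) := by
    rw [derivative_comp, hq]
  have h2 : derivative (derivative ((T ℂ n).comp (1 - 2 * X))) =
      4 * (derivative (derivative (T ℂ n))).comp (1 - 2 * X) := by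
    rw [h1, derivative_mul, derivative_comp, hq]
    simp
    ring
  have h3 := congrArg (fun p : ℂ[X] => p.comp (1 - 2 * X)) (my_cheb_ode n)
  simp only [mul_comp, sub_comp, pow_comp, X_comp, one_comp, intCast_comp] at h3
  rw [h2, h1]
  linear_combination 2 * h3

open Polynomial Polynomial.Chebyshev in
private lemma my_coeff_rec (n : ℤ) (k : ℕ) :
    ((k : ℂ) + 1) * (2 * (k : ℂ) + 1) * ((T ℂ n).comp (1 - 2 * X)).coeff (k + 1)
      = 2 * ((n : ℂ) ^ 2 - (k : ℂ) ^ 2) * (-((T ℂ n).comp (1 - 2 * X)).coeff k) := by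
  set P := (T ℂ n).comp (1 - 2 * X) with hP
  set D1 := derivative P with hD1
  set D2 := derivative D1 with hD2
  have h0 : 2 * (X * D2) + D1 + ((2 * n ^ 2 : ℤ) : ℂ[X]) * P
      = 2 * (X ^ 2 * D2) + 2 * (X * D1) := by
    have h := my_hyp_ode n
    push_cast
    linear_combination h
  match k with
  | 0 =>
    have hc := congrArg (fun p : ℂ[X] => p.coeff 0) h0
    simp only [coeff_add, coeff_ofNat_mul, coeff_intCast_mul, mul_coeff_zero, coeff_X_zero,
      pow_two, zero_mul, mul_zero, add_zero, zero_add] at hc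
    simp only [hD1, coeff_derivative] at hc
    push_cast at hc ⊢
    norm_num at hc ⊢
    linear_combination hc
  | 1 =>
    have hc := congrArg (fun p : ℂ[X] => p.coeff 1) h0
    have e1 : (X * D2).coeff 1 = D2.coeff 0 := by simpa using coeff_X_mul D2 0
    have e2 : (X ^ 2 * D2).coeff 1 = 0 := by rw [coeff_X_pow_mul']; norm_num
    have e3 : (X * D1).coeff 1 = D1.coeff 0 := by simpa using coeff_X_mul D1 0
    simp only [coeff_add, coeff_ofNat_mul, coeff_intCast_mul, e1, e2, e3] at hc
    simp only [hD2, hD1, coeff_derivative] at hc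
    push_cast at hc ⊢
    norm_num at hc ⊢
    linear_combination hc
  | (j + 2) =>
    have hc := congrArg (fun p : ℂ[X] => p.coeff (j + 2)) h0
    have e1 : (X * D2).coeff (j + 2) = D2.coeff (j + 1) := by
      simpa using coeff_X_mul D2 (j + 1)
    have e2 : (X ^ 2 * D2).coeff (j + 2) = D2.coeff j := coeff_X_pow_mul D2 2 j
    have e3 : (X * D1).coeff (j + 2) = D1.coeff (j + 1) := by
      simpa using coeff_X_mul D1 (j + 1)
    simp only [coeff_add, coeff_ofNat_mul, coeff_intCast_mul, e1, e2, e3] at hc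
    simp only [hD2, hD1, coeff_derivative] at hc ⊢
    push_cast at hc ⊢
    ring_nf at hc ⊢
    linear_combination hc

/-- The Taylor coefficients of `T_a(1-2z)`: `cc a 0 = 1`,
`cc a (k+1) = -4 (a² - k²)/((2k+1)(2k+2)) · cc a k`. -/
noncomputable def cc (a : ℂ) : ℕ → ℂ
  | 0 => 1
  | (k+1) => -4 * (a ^ 2 - (k : ℂ) ^ 2) / ((2 * (k : ℂ) + 1) * (2 * (k : ℂ) + 2)) * cc a k

private lemma natcast_ne (f : ℂ) (N : ℕ) (hN : 0 < N) (hf : ((N : ℕ) : ℂ) = f) : f ≠ 0 := by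
  rw [← hf]; exact_mod_cast Nat.cast_ne_zero.mpr (by omega)

open Polynomial Polynomial.Chebyshev in
private lemma my_coeff_eq (a : ℕ) (k : ℕ) :
    ((T ℂ (a : ℤ)).comp (1 - 2 * X)).coeff k = cc (a : ℂ) k := by
  induction k with
  | zero =>
    rw [coeff_zero_eq_eval_zero, eval_comp]
    simp only [eval_sub, eval_one, eval_mul, eval_ofNat, eval_X, mul_zero, sub_zero]
    have h := Polynomial.Chebyshev.T_complex_cos 0 (a : ℤ)
    simp only [Complex.cos_zero, mul_zero] at h
    rw [h]
    rfl
  | succ k ih =>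
    have h := my_coeff_rec (a : ℤ) k
    rw [ih] at h
    have h1 : ((k : ℂ) + 1) ≠ 0 := natcast_ne _ (k + 1) (by omega) (by push_cast; ring)
    have h2 : (2 * (k : ℂ) + 1) ≠ 0 := natcast_ne _ (2 * k + 1) (by omega) (by push_cast; ring)
    have h3 : (2 * (k : ℂ) + 2) ≠ 0 := natcast_ne _ (2 * k + 2) (by omega) (by push_cast; ring)
    have key : ((T ℂ (a : ℤ)).comp (1 - 2 * X)).coeff (k + 1)
        = 2 * (((a : ℤ) : ℂ) ^ 2 - (k : ℂ) ^ 2) * (-(cc (a : ℂ) k)) /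
          (((k : ℂ) + 1) * (2 * (k : ℂ) + 1)) := by
      field_simp
      linear_combination h
    rw [key]
    show _ = cc (a : ℂ) (k + 1)
    rw [show cc (a : ℂ) (k + 1)
        = -4 * ((a : ℂ) ^ 2 - (k : ℂ) ^ 2) / ((2 * (k : ℂ) + 1) * (2 * (k : ℂ) + 2)) * cc (a : ℂ) k
        from rfl]
    push_cast
    field_simp
    ring

open Polynomial Polynomial.Chebyshev in
private lemma my_cc_support (a : ℕ) {k : ℕ}
    (hk : ((T ℂ (a : ℤ)).comp (1 - 2 * X)).natDegree < k) :
    cc (a : ℂ) k = 0 := by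
  rw [← my_coeff_eq]; exact Polynomial.coeff_eq_zero_of_natDegree_lt hk

open Polynomial Polynomial.Chebyshev in
private lemma my_Teval (a : ℕ) (z : ℂ) :
    (T ℂ (a : ℤ)).eval (1 - 2 * z) = ∑' k : ℕ, cc (a : ℂ) k * z ^ k := by
  set P := (T ℂ (a : ℤ)).comp (1 - 2 * X) with hP
  have h1 : ∑' k : ℕ, cc (a : ℂ) k * z ^ k
      = ∑ k ∈ Finset.range (P.natDegree + 1), cc (a : ℂ) k * z ^ k := by
    apply tsum_eq_sum
    intro b hb
    rw [Finset.mem_range, not_lt] at hb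
    have hb2 : P.natDegree < b := by omega
    rw [hP] at hb2
    rw [my_cc_support a hb2]
    ring
  rw [h1]
  have h2 : (T ℂ (a : ℤ)).eval (1 - 2 * z) = P.eval z := by
    rw [hP, eval_comp]; simp
  rw [h2, Polynomial.eval_eq_sum_range]
  exact Finset.sum_congr rfl fun k _ => by rw [my_coeff_eq a k]

open Polynomial Polynomial.Chebyshev in
private lemma my_T_three : T ℂ 3 = 4 * X ^ 3 - 3 * X := by
  have h := T_add_two ℂ 1
  rw [show (1 : ℤ) + 2 = 3 by norm_num, show (1 : ℤ) + 1 = 2 by norm_num, T_two, T_one] at h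
  rw [h]; ring

open Polynomial Polynomial.Chebyshev in
private lemma my_T_cube (a : ℕ) (y : ℂ) :
    ((T ℂ (a : ℤ)).eval y) ^ 3
      = ((T ℂ ((3 * a : ℕ) : ℤ)).eval y + 3 * (T ℂ (a : ℤ)).eval y) / 4 := by
  have hm : ((3 * a : ℕ) : ℤ) = 3 * (a : ℤ) := by push_cast; ring
  rw [hm, T_mul, eval_comp, my_T_three]
  simp only [eval_sub, eval_mul, eval_ofNat, eval_pow, eval_X]
  ring

open Polynomial in
private lemma my_asc_eval_succ (x : ℂ) (k : ℕ) :
    (ascPochhammer ℂ (k + 1)).eval x = (ascPochhammer ℂ k).eval x * (x + k) := by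
  rw [ascPochhammer_succ_right]
  simp

open Polynomial in
private lemma my_asc_half_ne (k : ℕ) : (ascPochhammer ℂ k).eval (1 / 2) ≠ 0 := by
  induction k with
  | zero => simp
  | succ k ih =>
    rw [my_asc_eval_succ]
    refine mul_ne_zero ih ?_
    have h2 : ((2 * k + 1 : ℕ) : ℂ) ≠ 0 := Nat.cast_ne_zero.mpr (by omega)
    intro h
    apply h2
    push_cast
    linear_combination 2 * h

open Polynomial in
private lemma my_hyper_term (m k : ℕ) :
    (ascPochhammer ℂ k).eval (-(m : ℂ)) * (ascPochhammer ℂ k).eval (m : ℂ) /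
      ((ascPochhammer ℂ k).eval (1 / 2) * (k ! : ℂ)) = cc (m : ℂ) k := by
  induction k with
  | zero => simp [cc]
  | succ k ih =>
    have hfac : ((k ! : ℕ) : ℂ) ≠ 0 := Nat.cast_ne_zero.mpr (Nat.factorial_ne_zero k)
    have hk1 : ((k : ℂ) + 1) ≠ 0 := natcast_ne _ (k + 1) (by omega) (by push_cast; ring)
    have hhalf := my_asc_half_ne k
    have hhk : (1 / 2 + (k : ℂ)) ≠ 0 := by
      have h2 : ((2 * k + 1 : ℕ) : ℂ) ≠ 0 := Nat.cast_ne_zero.mpr (by omega)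
      intro h; apply h2; push_cast; linear_combination 2 * h
    have h2k1 : (2 * (k : ℂ) + 1) ≠ 0 := natcast_ne _ (2 * k + 1) (by omega) (by push_cast; ring)
    have h2k2 : (2 * (k : ℂ) + 2) ≠ 0 := natcast_ne _ (2 * k + 2) (by omega) (by push_cast; ring)
    rw [my_asc_eval_succ, my_asc_eval_succ, my_asc_eval_succ]
    have expand : (ascPochhammer ℂ k).eval (-(m:ℂ)) * (-(m:ℂ) + k) *
          ((ascPochhammer ℂ k).eval (m:ℂ) * ((m:ℂ) + k)) /
        ((ascPochhammer ℂ k).eval (1/2) * (1/2 + (k:ℂ)) * ((k+1)! : ℂ))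
        = ((ascPochhammer ℂ k).eval (-(m:ℂ)) * (ascPochhammer ℂ k).eval (m:ℂ) /
            ((ascPochhammer ℂ k).eval (1/2) * (k ! : ℂ))) *
          ((-(m:ℂ) + k) * ((m:ℂ) + k) / ((1/2 + (k:ℂ)) * ((k:ℂ) + 1))) := by
      rw [show (((k+1)! : ℕ) : ℂ) = (k ! : ℂ) * ((k:ℂ) + 1) by push_cast [Nat.factorial_succ]; ring]
      field_simp
    rw [expand, ih, show cc (m : ℂ) (k + 1)
        = -4 * ((m : ℂ) ^ 2 - (k : ℂ) ^ 2) / ((2 * (k : ℂ) + 1) * (2 * (k : ℂ) + 2)) * cc (m : ℂ) k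
        from rfl]
    have hr : (-(m:ℂ) + k) * ((m:ℂ) + k) / ((1/2 + (k:ℂ)) * ((k:ℂ) + 1))
        = -4 * ((m : ℂ) ^ 2 - (k : ℂ) ^ 2) / ((2 * (k : ℂ) + 1) * (2 * (k : ℂ) + 2)) := by
      rw [div_eq_div_iff (mul_ne_zero hhk hk1) (mul_ne_zero h2k1 h2k2)]
      ring
    rw [hr]
    ring

private lemma my_cc_rec (m : ℕ) (a : ℂ)
    (ha : a ^ 2 = (m : ℂ) ^ 2 ∨ a ^ 2 = 9 * (m : ℂ) ^ 2) (k : ℕ) :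
    cc a (k + 3) =
      ((-(20 * (m : ℂ) ^ 2) + 6 * ((k : ℂ) + 2) ^ 2 - 9 * ((k : ℂ) + 2) + 5) /
        (2 * ((k : ℂ) + 2) ^ 2 + 3 * ((k : ℂ) + 2) + 1)) * cc a (k + 2)
      + ((-(36 * (m : ℂ) ^ 4) + 20 * (m : ℂ) ^ 2 * (((k : ℂ) + 2) - 1) * (4 * ((k : ℂ) + 2) - 5)
          - 2 * (((k : ℂ) + 2) - 1) * (2 * ((k : ℂ) + 2) * (3 * (((k : ℂ) + 2) - 4) * ((k : ℂ) + 2) + 17) - 17)) /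
        (((k : ℂ) + 2) * (((k : ℂ) + 2) + 1) * (2 * ((k : ℂ) + 2) - 1) * (2 * ((k : ℂ) + 2) + 1))) * cc a (k + 1)
      + (4 * (9 * (m : ℂ) ^ 4 - 10 * (m : ℂ) ^ 2 * (((k : ℂ) + 2) - 2) ^ 2 + (((k : ℂ) + 2) - 2) ^ 4) /
        (((k : ℂ) + 2) * (((k : ℂ) + 2) + 1) * (2 * ((k : ℂ) + 2) - 1) * (2 * ((k : ℂ) + 2) + 1))) * cc a k := by
  have n1 : (2 * (k : ℂ) + 1) ≠ 0 := natcast_ne _ (2 * k + 1) (by omega) (by push_cast; ring)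
  have n2 : (2 * (k : ℂ) + 2) ≠ 0 := natcast_ne _ (2 * k + 2) (by omega) (by push_cast; ring)
  have n3 : (2 * (k : ℂ) + 3) ≠ 0 := natcast_ne _ (2 * k + 3) (by omega) (by push_cast; ring)
  have n4 : (2 * (k : ℂ) + 4) ≠ 0 := natcast_ne _ (2 * k + 4) (by omega) (by push_cast; ring)
  have n5 : (2 * (k : ℂ) + 5) ≠ 0 := natcast_ne _ (2 * k + 5) (by omega) (by push_cast; ring)
  have n6 : (2 * (k : ℂ) + 6) ≠ 0 := natcast_ne _ (2 * k + 6) (by omega) (by push_cast; ring)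
  have hqA : (2 * ((k : ℂ) + 2) ^ 2 + 3 * ((k : ℂ) + 2) + 1) ≠ 0 :=
    natcast_ne _ (2 * (k + 2) ^ 2 + 3 * (k + 2) + 1) (by positivity) (by push_cast; ring)
  have hqB : (((k : ℂ) + 2) * (((k : ℂ) + 2) + 1) * (2 * ((k : ℂ) + 2) - 1) * (2 * ((k : ℂ) + 2) + 1)) ≠ 0 :=
    natcast_ne _ ((k + 2) * (k + 3) * (2 * k + 3) * (2 * k + 5)) (by positivity) (by push_cast; ring)
  have s1 : cc a (k + 1)
      = -4 * (a ^ 2 - (k : ℂ) ^ 2) / ((2 * (k : ℂ) + 1) * (2 * (k : ℂ) + 2)) * cc a k := rfl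
  have s2 : cc a (k + 2)
      = -4 * (a ^ 2 - ((k : ℂ) + 1) ^ 2) / ((2 * (k : ℂ) + 3) * (2 * (k : ℂ) + 4)) * cc a (k + 1) := by
    rw [show cc a (k + 2)
        = -4 * (a ^ 2 - ((k + 1 : ℕ) : ℂ) ^ 2) /
            ((2 * ((k + 1 : ℕ) : ℂ) + 1) * (2 * ((k + 1 : ℕ) : ℂ) + 2)) * cc a (k + 1)
        from rfl]
    push_cast
    ring_nf
  have s3 : cc a (k + 3)
      = -4 * (a ^ 2 - ((k : ℂ) + 2) ^ 2) / ((2 * (k : ℂ) + 5) * (2 * (k : ℂ) + 6)) * cc a (k + 2) := by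
    rw [show cc a (k + 3)
        = -4 * (a ^ 2 - ((k + 2 : ℕ) : ℂ) ^ 2) /
            ((2 * ((k + 2 : ℕ) : ℂ) + 1) * (2 * ((k + 2 : ℕ) : ℂ) + 2)) * cc a (k + 2)
        from rfl]
    push_cast
    ring_nf
  have t1 : (2 * (k : ℂ) + 1) * (2 * (k : ℂ) + 2) * cc a (k + 1)
      = -4 * (a ^ 2 - (k : ℂ) ^ 2) * cc a k := by
    rw [s1]; field_simp
  have t2 : (2 * (k : ℂ) + 3) * (2 * (k : ℂ) + 4) * cc a (k + 2)
      = -4 * (a ^ 2 - ((k : ℂ) + 1) ^ 2) * cc a (k + 1) := by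
    rw [s2]; field_simp
  have t3 : (2 * (k : ℂ) + 5) * (2 * (k : ℂ) + 6) * cc a (k + 3)
      = -4 * (a ^ 2 - ((k : ℂ) + 2) ^ 2) * cc a (k + 2) := by
    rw [s3]; field_simp
  suffices key :
      ((2 * ((k : ℂ) + 2) ^ 2 + 3 * ((k : ℂ) + 2) + 1) *
        (((k : ℂ) + 2) * (((k : ℂ) + 2) + 1) * (2 * ((k : ℂ) + 2) - 1) * (2 * ((k : ℂ) + 2) + 1)))
        * cc a (k + 3)
      = ((-(20 * (m : ℂ) ^ 2) + 6 * ((k : ℂ) + 2) ^ 2 - 9 * ((k : ℂ) + 2) + 5) *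
          (((k : ℂ) + 2) * (((k : ℂ) + 2) + 1) * (2 * ((k : ℂ) + 2) - 1) * (2 * ((k : ℂ) + 2) + 1))) * cc a (k + 2)
        + ((-(36 * (m : ℂ) ^ 4) + 20 * (m : ℂ) ^ 2 * (((k : ℂ) + 2) - 1) * (4 * ((k : ℂ) + 2) - 5)
            - 2 * (((k : ℂ) + 2) - 1) * (2 * ((k : ℂ) + 2) * (3 * (((k : ℂ) + 2) - 4) * ((k : ℂ) + 2) + 17) - 17)) *
          (2 * ((k : ℂ) + 2) ^ 2 + 3 * ((k : ℂ) + 2) + 1)) * cc a (k + 1)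
        + (4 * (9 * (m : ℂ) ^ 4 - 10 * (m : ℂ) ^ 2 * (((k : ℂ) + 2) - 2) ^ 2 + (((k : ℂ) + 2) - 2) ^ 4) *
          (2 * ((k : ℂ) + 2) ^ 2 + 3 * ((k : ℂ) + 2) + 1)) * cc a k by
    rw [div_mul_eq_mul_div, div_mul_eq_mul_div, div_mul_eq_mul_div,
      div_add_div _ _ hqA hqB, div_add_div _ _ (mul_ne_zero hqA hqB) hqB,
      eq_div_iff (mul_ne_zero (mul_ne_zero hqA hqB) hqB)]
    linear_combination (((k : ℂ) + 2) * (((k : ℂ) + 2) + 1) * (2 * ((k : ℂ) + 2) - 1) *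
      (2 * ((k : ℂ) + 2) + 1)) * key
  rcases ha with ha | ha <;> rw [ha] at t1 t2 t3
  · linear_combination
      (45 + (171/2)*(k:ℂ) + (119/2)*(k:ℂ)^2 + 18*(k:ℂ)^3 + 2*(k:ℂ)^4) * t3
      + ((-45/2) + 135*(m:ℂ)^2 + (-69)*(k:ℂ) + 99*(k:ℂ)*(m:ℂ)^2 + (-143/2)*(k:ℂ)^2
          + 18*(k:ℂ)^2*(m:ℂ)^2 + (-29)*(k:ℂ)^3 + (-4)*(k:ℂ)^4) * t2
      + ((-135)*(m:ℂ)^2 + (-99)*(k:ℂ)*(m:ℂ)^2 + 15*(k:ℂ)^2 + (-18)*(k:ℂ)^2*(m:ℂ)^2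
          + 11*(k:ℂ)^3 + 2*(k:ℂ)^4) * t1
  · linear_combination
      (45 + (171/2)*(k:ℂ) + (119/2)*(k:ℂ)^2 + 18*(k:ℂ)^3 + 2*(k:ℂ)^4) * t3
      + ((-45/2) + 15*(m:ℂ)^2 + (-69)*(k:ℂ) + 11*(k:ℂ)*(m:ℂ)^2 + (-143/2)*(k:ℂ)^2
          + 2*(k:ℂ)^2*(m:ℂ)^2 + (-29)*(k:ℂ)^3 + (-4)*(k:ℂ)^4) * t2
      + ((-15)*(m:ℂ)^2 + (-11)*(k:ℂ)*(m:ℂ)^2 + 15*(k:ℂ)^2 + (-2)*(k:ℂ)^2*(m:ℂ)^2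
          + 11*(k:ℂ)^3 + 2*(k:ℂ)^4) * t1

private lemma my_cc_one (b : ℂ) : cc b 1 = -2 * b ^ 2 := by
  rw [show cc b 1 = -4 * (b ^ 2 - ((0 : ℕ) : ℂ) ^ 2) /
      ((2 * ((0 : ℕ) : ℂ) + 1) * (2 * ((0 : ℕ) : ℂ) + 2)) * cc b 0 from rfl,
    show cc b 0 = 1 from rfl]
  norm_num
  ring

private lemma my_cc_two (b : ℂ) : cc b 2 = 2 / 3 * b ^ 2 * (b ^ 2 - 1) := by
  rw [show cc b 2 = -4 * (b ^ 2 - ((1 : ℕ) : ℂ) ^ 2) /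
      ((2 * ((1 : ℕ) : ℂ) + 1) * (2 * ((1 : ℕ) : ℂ) + 2)) * cc b 1 from rfl, my_cc_one]
  norm_num
  ring

/-- The Gaussian hypergeometric function `F(a,b;c;z)`. -/
noncomputable def hyperF (a b c z : ℂ) : ℂ :=
  ∑' k : ℕ, ((ascPochhammer ℂ k).eval a * (ascPochhammer ℂ k).eval b /
    ((ascPochhammer ℂ k).eval c * (k ! : ℂ))) * z ^ k

theorem cubed_chebyshev_recurrence
    (m : ℕ) (z : ℂ) (hz : ‖z‖ < 1)
    (v : ℕ → ℂ)
    (hv0 : v 0 = 1)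
    (hv1 : v 1 = -(6 * (m : ℂ) ^ 2))
    (hv2 : v 2 = 2 * (7 * (m : ℂ) ^ 4 - (m : ℂ) ^ 2))
    (hrec : ∀ n : ℕ, 2 ≤ n →
      v (n + 1) =
        ((-(20 * (m : ℂ) ^ 2) + 6 * (n : ℂ) ^ 2 - 9 * (n : ℂ) + 5) /
          (2 * (n : ℂ) ^ 2 + 3 * (n : ℂ) + 1)) * v n
        + ((-(36 * (m : ℂ) ^ 4) + 20 * (m : ℂ) ^ 2 * ((n : ℂ) - 1) * (4 * (n : ℂ) - 5)
            - 2 * ((n : ℂ) - 1) * (2 * (n : ℂ) * (3 * ((n : ℂ) - 4) * (n : ℂ) + 17) - 17)) /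
          ((n : ℂ) * ((n : ℂ) + 1) * (2 * (n : ℂ) - 1) * (2 * (n : ℂ) + 1))) * v (n - 1)
        + (4 * (9 * (m : ℂ) ^ 4 - 10 * (m : ℂ) ^ 2 * ((n : ℂ) - 2) ^ 2 + ((n : ℂ) - 2) ^ 4) /
          ((n : ℂ) * ((n : ℂ) + 1) * (2 * (n : ℂ) - 1) * (2 * (n : ℂ) + 1))) * v (n - 2)) :
    ((Polynomial.Chebyshev.T ℂ (m : ℤ)).eval (1 - 2 * z)) ^ 3
        = ∑' n : ℕ, v n * z ^ n ∧
    (hyperF (-(m : ℂ)) (m : ℂ) (1 / 2) z) ^ 3 = ∑' n : ℕ, v n * z ^ n := by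
  have ha3 : (((3 * m : ℕ) : ℂ)) ^ 2 = 9 * (m : ℂ) ^ 2 := by push_cast; ring
  -- v agrees with the combination of cc's
  have hw : ∀ n : ℕ, v n = (cc ((3 * m : ℕ) : ℂ) n + 3 * cc (m : ℂ) n) / 4 := by
    intro n
    induction n using Nat.strong_induction_on with
    | _ n ih =>
      match n with
      | 0 =>
        rw [hv0, show cc ((3 * m : ℕ) : ℂ) 0 = 1 from rfl, show cc (m : ℂ) 0 = 1 from rfl]
        norm_num
      | 1 =>
        rw [hv1, my_cc_one, my_cc_one, ha3]
        ring
      | 2 =>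
        rw [hv2, my_cc_two, my_cc_two, ha3]
        ring
      | (k + 3) =>
        have h := hrec (k + 2) (by omega)
        have i2 : v (k + 2) = (cc ((3 * m : ℕ) : ℂ) (k + 2) + 3 * cc (m : ℂ) (k + 2)) / 4 :=
          ih (k + 2) (by omega)
        have i1 : v (k + 1) = (cc ((3 * m : ℕ) : ℂ) (k + 1) + 3 * cc (m : ℂ) (k + 1)) / 4 :=
          ih (k + 1) (by omega)
        have i0 : v k = (cc ((3 * m : ℕ) : ℂ) k + 3 * cc (m : ℂ) k) / 4 :=
          ih k (by omega)
        have e1 : k + 2 - 1 = k + 1 := by omega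
        have e2 : k + 2 - 2 = k := by omega
        have r3 := my_cc_rec m ((3 * m : ℕ) : ℂ) (Or.inr ha3) k
        have r1 := my_cc_rec m (m : ℂ) (Or.inl rfl) k
        rw [e1, e2, i2, i1, i0] at h
        rw [show k + 2 + 1 = k + 3 from rfl] at h
        push_cast at h r3 r1 ⊢
        rw [h]
        linear_combination (-1 / 4) * r3 + (-3 / 4) * r1
  -- the tsum equals the combination of the two Chebyshev evaluations
  have hT1 := my_Teval m z
  have hT3 := my_Teval (3 * m) z
  set N1 := ((Polynomial.Chebyshev.T ℂ (m : ℤ)).comp (1 - 2 * Polynomial.X)).natDegree with hN1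
  set N3 := ((Polynomial.Chebyshev.T ℂ ((3 * m : ℕ) : ℤ)).comp (1 - 2 * Polynomial.X)).natDegree
    with hN3
  set N := max N1 N3 + 1 with hN
  have hs1 : ∑' k : ℕ, cc (m : ℂ) k * z ^ k = ∑ k ∈ Finset.range N, cc (m : ℂ) k * z ^ k := by
    apply tsum_eq_sum
    intro b hb
    rw [Finset.mem_range, not_lt] at hb
    rw [my_cc_support m (show N1 < b by omega)]
    ring
  have hs3 : ∑' k : ℕ, cc ((3 * m : ℕ) : ℂ) k * z ^ k
      = ∑ k ∈ Finset.range N, cc ((3 * m : ℕ) : ℂ) k * z ^ k := by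
    apply tsum_eq_sum
    intro b hb
    rw [Finset.mem_range, not_lt] at hb
    rw [my_cc_support (3 * m) (show N3 < b by omega)]
    ring
  have hsv : ∑' n : ℕ, v n * z ^ n = ∑ n ∈ Finset.range N, v n * z ^ n := by
    apply tsum_eq_sum
    intro b hb
    rw [Finset.mem_range, not_lt] at hb
    rw [hw b, my_cc_support m (show N1 < b by omega),
      my_cc_support (3 * m) (show N3 < b by omega)]
    ring
  have main : ((Polynomial.Chebyshev.T ℂ (m : ℤ)).eval (1 - 2 * z)) ^ 3
      = ∑' n : ℕ, v n * z ^ n := by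
    rw [my_T_cube m (1 - 2 * z), hT1, hT3, hs1, hs3, hsv]
    rw [div_eq_iff (by norm_num : (4 : ℂ) ≠ 0), Finset.mul_sum, Finset.sum_mul,
      ← Finset.sum_add_distrib]
    exact Finset.sum_congr rfl fun n _ => by rw [hw n]; ring
  constructor
  · exact main
  · have hhyp : hyperF (-(m : ℂ)) (m : ℂ) (1 / 2) z
        = (Polynomial.Chebyshev.T ℂ (m : ℤ)).eval (1 - 2 * z) := by
      rw [hyperF, hT1]
      exact tsum_congr fun k => by rw [my_hyper_term m k]
    rw [hhyp]
    exact main
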